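/- Let P be a probability measure on a measurable space, M > 0, and f a measurable real-valued function with |f| ≤ M P-almost everywhere. Then M² · ∫ (exp(|f|/M) − 1 − |f|/M) dP ≤ (1/2) · 1.5 · ∫ f² dP; that is, (M, 1.5·∫ f² dP) is a Bernstein pair for f. -/

import Mathlib

open MeasureTheory

-- The constant `3 / 4` is the `n = 2` case of `Real.exp_bound`.
lemma Real.exp_sub_one_sub_le_three_quarters_mul_sq {t : ℝ} (ht : |t| ≤ 1) :
    Real.exp t - 1 - t ≤ 3 / 4 * t ^ 2 := by
  have h := (abs_le.1 (Real.exp_bound ht (n := 2) (by norm_num))).2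
  norm_num [Finset.sum_range_succ, Nat.factorial, sq_abs] at h
  linarith

lemma sq_mul_exp_abs_div_sub_le {M y : ℝ} (hM : 0 < M) (hy : |y| ≤ M) :
    M ^ 2 * (Real.exp (|y| / M) - 1 - |y| / M) ≤ 3 / 4 * y ^ 2 := by
  have ht : |(|y| / M)| ≤ 1 := by
    rwa [abs_div, abs_abs, abs_of_pos hM, div_le_one hM]
  have hsq : M ^ 2 * (|y| / M) ^ 2 = y ^ 2 := by
    field_simp
    exact sq_abs y
  calc M ^ 2 * (Real.exp (|y| / M) - 1 - |y| / M)
      ≤ M ^ 2 * (3 / 4 * (|y| / M) ^ 2) :=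
        mul_le_mul_of_nonneg_left (Real.exp_sub_one_sub_le_three_quarters_mul_sq ht) (sq_nonneg M)
    _ = 3 / 4 * y ^ 2 := by rw [← hsq]; ring

lemma integrable_sq_of_ae_abs_le {α : Type*} [MeasurableSpace α] {μ : Measure α}
    [IsFiniteMeasure μ] {f : α → ℝ} {M : ℝ} (hf : AEStronglyMeasurable f μ)
    (hbd : ∀ᵐ x ∂μ, |f x| ≤ M) : Integrable (fun x => f x ^ 2) μ := by
  refine Integrable.of_bound (hf.pow 2) (M ^ 2) ?_
  filter_upwards [hbd] with x hx
  rw [Real.norm_eq_abs, abs_pow, sq_le_sq, abs_abs]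
  exact hx.trans (le_abs_self M)

/-- if `|f| ≤ M` almost everywhere (with `M > 0`) for a probability
measure `P`, then `(M, 1.5·∫ f² dP)` is a Bernstein pair for `f`. -/
theorem bernstein_pair_of_bounded {α : Type*} [MeasurableSpace α]
    (P : Measure α) [IsProbabilityMeasure P]
    (M : ℝ) (hM : 0 < M) (f : α → ℝ) (hf : Measurable f)
    (hbd : ∀ᵐ x ∂P, |f x| ≤ M) :
    M ^ 2 * ∫ x, (Real.exp (|f x| / M) - 1 - |f x| / M) ∂P ≤
      (1 / 2) * (1.5 * ∫ x, (f x) ^ 2 ∂P) := by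
  have hrhs : (1 / 2 : ℝ) * (1.5 * ∫ x, (f x) ^ 2 ∂P) = ∫ x, 3 / 4 * (f x) ^ 2 ∂P := by
    rw [integral_const_mul]; norm_num; ring
  rw [← integral_const_mul, hrhs]
  refine integral_mono_of_nonneg (Filter.Eventually.of_forall fun x => ?_)
    ((integrable_sq_of_ae_abs_le hf.aestronglyMeasurable hbd).const_mul _) ?_
  · have := Real.add_one_le_exp (|f x| / M)
    exact mul_nonneg (sq_nonneg M) (by linarith)
  · filter_upwards [hbd] with x hx
    exact sq_mul_exp_abs_div_sub_le hM hx
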